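/- arXiv:2312.00701 — 2 statements merged into one kernel-verified Lean document; each statement's English description precedes it below -/
import Mathlib

section
/- Let a group N act by simplicial automorphisms on a connected simplicial graph X with minimum displacement at least 8. Then for every vertex x of X, the quotient map π restricts to an isometry from the closed ball B(x,2) of radius 2 centred at x onto the closed ball of radius 2 centred at π(x) in X/N. -/
/-!
Edges of `X` map to edges of `X/N` because no vertex is adjacent to one of its translates, so `π`
is `1`-Lipschitz; conversely, every walk in `X/N` lifts to a walk of the same length starting at
any preimage of its origin, so `d(π y, π z) = min_n d(y, n • z)`. When `d(y, z) ≤ 4` the minimum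
is attained at `n = 1`, since `d(y, n • z) ≥ d(z, n • z) - d(y, z) ≥ 8 - 4` for `n ≠ 1`.
-/

variable {V N : Type*} [Group N] [MulAction N V]

/-- The quotient of a simplicial graph by a group action: vertices are `N`-orbits,
and two distinct orbits are adjacent iff they admit adjacent representatives. -/
def quotGraph (N : Type*) [Group N] [MulAction N V] (G : SimpleGraph V) :
    SimpleGraph (Quotient (MulAction.orbitRel N V)) where
  Adj a b := a ≠ b ∧ ∃ x y : V,
    Quotient.mk (MulAction.orbitRel N V) x = a ∧
    Quotient.mk (MulAction.orbitRel N V) y = b ∧ G.Adj x y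
  symm := by
    constructor
    rintro a b ⟨hne, x, y, hx, hy, hadj⟩
    exact ⟨hne.symm, y, x, hy, hx, hadj.symm⟩
  loopless := by
    constructor
    rintro a ⟨hne, _⟩
    exact hne rfl

open SimpleGraph

local notation "π" => Quotient.mk (MulAction.orbitRel N V)

namespace quotGraph

variable {G : SimpleGraph V}

lemma not_adj_smul_of_two_le_dist (hdisp : ∀ n : N, n ≠ 1 → ∀ x : V, 2 ≤ G.dist x (n • x))
    (n : N) (x : V) : ¬ G.Adj x (n • x) := by
  intro hadj
  rcases eq_or_ne n 1 with rfl | hne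
  · exact hadj.ne (one_smul N x).symm
  · have := hdisp n hne x
    rw [dist_eq_one_iff_adj.mpr hadj] at this
    omega

lemma adj_mk (hfree : ∀ (n : N) (x : V), ¬ G.Adj x (n • x)) {a b : V} (h : G.Adj a b) :
    (quotGraph N G).Adj (π a) (π b) := by
  refine ⟨fun he => ?_, a, b, rfl, rfl, h⟩
  obtain ⟨n, rfl⟩ := MulAction.orbitRel_apply.mp (Quotient.exact he)
  exact hfree n b h.symm

def mkHom (hfree : ∀ (n : N) (x : V), ¬ G.Adj x (n • x)) : G →g quotGraph N G :=
  ⟨π, adj_mk hfree⟩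

lemma dist_mk_le (hfree : ∀ (n : N) (x : V), ¬ G.Adj x (n • x)) {y z : V}
    (h : G.Reachable y z) : (quotGraph N G).dist (π y) (π z) ≤ G.dist y z := by
  obtain ⟨w, hw⟩ := h.exists_walk_length_eq_dist
  calc (quotGraph N G).dist (π y) (π z) ≤ (w.map (mkHom hfree)).length := dist_le _
    _ = G.dist y z := by rw [Walk.length_map, hw]

lemma exists_walk_lift (hact : ∀ (n : N) (x y : V), G.Adj x y → G.Adj (n • x) (n • y))
    {c : Quotient (MulAction.orbitRel N V)} (a : V) (w : (quotGraph N G).Walk (π a) c) :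
    ∃ b : V, π b = c ∧ ∃ w' : G.Walk a b, w'.length = w.length := by
  suffices ∀ {c₀ c} (w : (quotGraph N G).Walk c₀ c) (a : V), π a = c₀ →
      ∃ b : V, π b = c ∧ ∃ w' : G.Walk a b, w'.length = w.length from this w a rfl
  intro c₀ c w
  induction w with
  | nil => exact fun a ha => ⟨a, ha, .nil, rfl⟩
  | cons h _ ih =>
    intro a ha
    obtain ⟨-, u, v, hu, hv, huv⟩ := h
    obtain ⟨n, rfl⟩ := MulAction.orbitRel_apply.mp (Quotient.exact (hu.trans ha.symm))
    have hadj : G.Adj a (n⁻¹ • v) := by simpa using hact n⁻¹ _ _ huv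
    obtain ⟨b, hb, w', hw'⟩ := ih (n⁻¹ • v) (MulAction.orbitRel.Quotient.quotient_smul_eq.trans hv)
    exact ⟨b, hb, .cons hadj w', congrArg (· + 1) hw'⟩

lemma exists_dist_smul_le_dist_mk
    (hact : ∀ (n : N) (x y : V), G.Adj x y → G.Adj (n • x) (n • y)) {y z : V}
    (h : (quotGraph N G).Reachable (π y) (π z)) :
    ∃ n : N, G.dist y (n • z) ≤ (quotGraph N G).dist (π y) (π z) := by
  obtain ⟨w, hw⟩ := h.exists_walk_length_eq_dist
  obtain ⟨b, hb, w', hw'⟩ := exists_walk_lift hact y w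
  obtain ⟨n, rfl⟩ := MulAction.orbitRel_apply.mp (Quotient.exact hb)
  exact ⟨n, hw ▸ hw' ▸ dist_le w'⟩

theorem dist_mk_eq_of_two_mul_dist_le (hconn : G.Connected)
    (hact : ∀ (n : N) (x y : V), G.Adj x y → G.Adj (n • x) (n • y)) {δ : ℕ} (hδ : 2 ≤ δ)
    (hdisp : ∀ n : N, n ≠ 1 → ∀ x : V, δ ≤ G.dist x (n • x)) {y z : V}
    (hyz : 2 * G.dist y z ≤ δ) : (quotGraph N G).dist (π y) (π z) = G.dist y z := by
  have hfree := not_adj_smul_of_two_le_dist fun n hn x => hδ.trans (hdisp n hn x)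
  obtain ⟨n, hn⟩ := exists_dist_smul_le_dist_mk hact ((hconn y z).map (mkHom hfree))
  refine le_antisymm (dist_mk_le hfree (hconn y z)) ?_
  rcases eq_or_ne n 1 with rfl | hne
  · simpa using hn
  · have hz := hdisp n hne z
    have htri : G.dist z (n • z) ≤ G.dist z y + G.dist y (n • z) := hconn.dist_triangle
    have hzy : G.dist z y = G.dist y z := dist_comm
    omega

end quotGraph

open quotGraph in
/-- the quotient map restricts to an isometry from the ball of radius 2
about any vertex `x` onto the ball of radius 2 about its image. -/
theorem quotient_isometry_on_balls (G : SimpleGraph V) (hconn : G.Connected)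
    (hact : ∀ (n : N) (x y : V), G.Adj x y → G.Adj (n • x) (n • y))
    (hdisp : ∀ n : N, n ≠ 1 → ∀ x : V, 8 ≤ G.dist x (n • x))
    (x : V) :
    (∀ y z : V, G.dist x y ≤ 2 → G.dist x z ≤ 2 →
      (quotGraph N G).dist (Quotient.mk (MulAction.orbitRel N V) y)
        (Quotient.mk (MulAction.orbitRel N V) z) = G.dist y z) ∧
    (∀ b : Quotient (MulAction.orbitRel N V),
      (quotGraph N G).dist (Quotient.mk (MulAction.orbitRel N V) x) b ≤ 2 →
      ∃ y : V, G.dist x y ≤ 2 ∧ Quotient.mk (MulAction.orbitRel N V) y = b) := by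
  refine ⟨fun y z hy hz => dist_mk_eq_of_two_mul_dist_le hconn hact (by norm_num) hdisp ?_,
    fun b hb => ?_⟩
  · have htri : G.dist y z ≤ G.dist y x + G.dist x z := hconn.dist_triangle
    have hyx : G.dist y x = G.dist x y := dist_comm
    omega
  · have hfree := not_adj_smul_of_two_le_dist fun n hn x => le_trans (by norm_num) (hdisp n hn x)
    obtain ⟨b, rfl⟩ := Quotient.mk_surjective b
    obtain ⟨n, hn⟩ := exists_dist_smul_le_dist_mk hact ((hconn x b).map (mkHom hfree))
    exact ⟨n • b, hn.trans hb, MulAction.orbitRel.Quotient.quotient_smul_eq⟩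
end

section
/- Let a group N act on a connected simplicial graph X with minimum displacement at least 8, and suppose x̄, ȳ are vertices of the quotient graph X/N with Lk(x̄) = Lk(ȳ) (equal links in X/N). If in X any two distinct vertices have distinct links, then x̄ = ȳ. -/
/-!
If `x` has a neighbour `z`, then `π z` lies in the link of `π y`, so after moving `y` inside its
orbit we may assume that `z` is a common neighbour of `x` and `y`. A neighbour `u` of `x` then
projects into the link of `π y`, so some translate `n • u` is adjacent to `y`; the path
`u, x, z, y, n • u` has length `4`, below the displacement, which forces `n = 1`. Thus `x` and `y`
have the same link in `G`, hence are equal. If neither `x` nor `y` has a neighbour, their links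
are both empty and link injectivity in `G` applies directly.
-/

variable {V N : Type*} [Group N] [MulAction N V]

namespace quotGraph

local notation "π" => Quotient.mk (MulAction.orbitRel N V)

variable {G : SimpleGraph V} {d : ℕ}

theorem mk_eq_mk_iff {x y : V} : π x = π y ↔ ∃ n : N, n • y = x := by
  rw [Quotient.eq, MulAction.orbitRel_apply, MulAction.mem_orbit_iff]

theorem mk_smul (n : N) (x : V) : π (n • x) = π x :=
  mk_eq_mk_iff.mpr ⟨n, rfl⟩

theorem eq_one_of_dist_smul_lt (hdisp : ∀ n : N, n ≠ 1 → ∀ x : V, d ≤ G.dist x (n • x))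
    {n : N} {x : V} (h : G.dist x (n • x) < d) : n = 1 :=
  by_contra fun hn => (hdisp n hn x).not_gt h

theorem mk_adj_mk (hdisp : ∀ n : N, n ≠ 1 → ∀ x : V, d ≤ G.dist x (n • x)) (hd : 2 ≤ d)
    {v u : V} (hvu : G.Adj v u) : (quotGraph N G).Adj (π v) (π u) := by
  refine ⟨fun horbit => ?_, v, u, rfl, rfl, hvu⟩
  obtain ⟨n, rfl⟩ := mk_eq_mk_iff.mp horbit
  have hn : n = 1 := eq_one_of_dist_smul_lt hdisp <|
    calc G.dist u (n • u) ≤ 1 := by simpa using SimpleGraph.dist_le hvu.symm.toWalk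
      _ < d := hd
  subst hn
  simp at hvu

theorem exists_adj_smul_of_mk_adj_mk
    (hact : ∀ (n : N) (x y : V), G.Adj x y → G.Adj (n • x) (n • y))
    {v u : V} (h : (quotGraph N G).Adj (π v) (π u)) : ∃ n : N, G.Adj v (n • u) := by
  obtain ⟨-, p, q, hp, hq, hpq⟩ := h
  obtain ⟨k, rfl⟩ := mk_eq_mk_iff.mp hp
  obtain ⟨m, rfl⟩ := mk_eq_mk_iff.mp hq
  refine ⟨k⁻¹ * m, ?_⟩
  simpa [mul_smul] using hact k⁻¹ _ _ hpq

theorem eq_one_of_adj_of_adj_smul (hdisp : ∀ n : N, n ≠ 1 → ∀ x : V, d ≤ G.dist x (n • x))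
    (hd : 5 ≤ d) {x y z u : V} {n : N} (hxz : G.Adj x z) (hyz : G.Adj y z)
    (hxu : G.Adj x u) (hyu : G.Adj y (n • u)) : n = 1 :=
  eq_one_of_dist_smul_lt hdisp <|
    calc G.dist u (n • u)
        ≤ (.cons hxu.symm <| .cons hxz <| .cons hyz.symm <| .cons hyu .nil : G.Walk _ _).length :=
          SimpleGraph.dist_le _
      _ < d := hd

theorem neighborSet_subset_of_neighborSet_mk_subset
    (hact : ∀ (n : N) (x y : V), G.Adj x y → G.Adj (n • x) (n • y))
    (hdisp : ∀ n : N, n ≠ 1 → ∀ x : V, d ≤ G.dist x (n • x)) (hd : 5 ≤ d)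
    {x y z : V} (hxz : G.Adj x z) (hyz : G.Adj y z)
    (h : (quotGraph N G).neighborSet (π x) ⊆ (quotGraph N G).neighborSet (π y)) :
    G.neighborSet x ⊆ G.neighborSet y := by
  intro u (hxu : G.Adj x u)
  obtain ⟨n, hyu⟩ := exists_adj_smul_of_mk_adj_mk hact (h (mk_adj_mk hdisp (by omega) hxu))
  obtain rfl := eq_one_of_adj_of_adj_smul hdisp hd hxz hyz hxu hyu
  simpa using hyu

theorem mk_eq_mk_of_neighborSet_mk_eq
    (hact : ∀ (n : N) (x y : V), G.Adj x y → G.Adj (n • x) (n • y))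
    (hdisp : ∀ n : N, n ≠ 1 → ∀ x : V, d ≤ G.dist x (n • x)) (hd : 5 ≤ d)
    (hlink : ∀ x y : V, x ≠ y → G.neighborSet x ≠ G.neighborSet y)
    {x y z : V} (hxz : G.Adj x z)
    (h : (quotGraph N G).neighborSet (π x) = (quotGraph N G).neighborSet (π y)) :
    π x = π y := by
  have hyz : π z ∈ (quotGraph N G).neighborSet (π y) := h ▸ mk_adj_mk hdisp (by omega) hxz
  obtain ⟨n, hyz⟩ := exists_adj_smul_of_mk_adj_mk hact hyz
  have hy'z : G.Adj (n⁻¹ • y) z := by simpa using hact n⁻¹ _ _ hyz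
  rw [← mk_smul n⁻¹ y] at h ⊢
  have hset : G.neighborSet x = G.neighborSet (n⁻¹ • y) :=
    (neighborSet_subset_of_neighborSet_mk_subset hact hdisp hd hxz hy'z h.le).antisymm
      (neighborSet_subset_of_neighborSet_mk_subset hact hdisp hd hy'z hxz h.ge)
  by_contra hne
  exact hlink x _ (fun hxy => hne (congrArg π hxy)) hset

end quotGraph

theorem quotient_link_injective_general (G : SimpleGraph V)
    (hact : ∀ (n : N) (x y : V), G.Adj x y → G.Adj (n • x) (n • y))
    (hdisp : ∀ n : N, n ≠ 1 → ∀ x : V, 8 ≤ G.dist x (n • x))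
    (hlink : ∀ x y : V, x ≠ y → G.neighborSet x ≠ G.neighborSet y)
    (a b : Quotient (MulAction.orbitRel N V))
    (h : (quotGraph N G).neighborSet a = (quotGraph N G).neighborSet b) :
    a = b := by
  obtain ⟨x, rfl⟩ := a.exists_rep
  obtain ⟨y, rfl⟩ := b.exists_rep
  by_cases hx : ∃ z, G.Adj x z
  · exact quotGraph.mk_eq_mk_of_neighborSet_mk_eq hact hdisp (by norm_num) hlink hx.choose_spec h
  by_cases hy : ∃ z, G.Adj y z
  · exact (quotGraph.mk_eq_mk_of_neighborSet_mk_eq hact hdisp (by norm_num) hlink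
      hy.choose_spec h.symm).symm
  simp only [not_exists] at hx hy
  have hxy : x = y := by
    by_contra hne
    exact hlink x y hne (by ext z; simp [hx z, hy z])
  rw [hxy]

/-- if `N` acts on a connected simplicial graph `X` with minimum
displacement at least 8, and in `X` distinct vertices have distinct links, then the
same holds in the quotient: vertices of `X/N` with equal links coincide. -/
theorem quotient_link_injective (G : SimpleGraph V) (hconn : G.Connected)
    (hact : ∀ (n : N) (x y : V), G.Adj x y → G.Adj (n • x) (n • y))
    (hdisp : ∀ n : N, n ≠ 1 → ∀ x : V, 8 ≤ G.dist x (n • x))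
    (hlink : ∀ x y : V, x ≠ y → G.neighborSet x ≠ G.neighborSet y)
    (a b : Quotient (MulAction.orbitRel N V))
    (h : (quotGraph N G).neighborSet a = (quotGraph N G).neighborSet b) :
    a = b :=
  quotient_link_injective_general G hact hdisp hlink a b h
end
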